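/- The only common zero in ℂ³ of the three partial derivatives of the Klein quartic Q = z₀³z₂ + z₁³z₀ + z₂³z₁ is the origin; that is, the plane projective quartic curve {Q = 0} is smooth. -/

import Mathlib

/-!
Write `v = (a, b, c)`. The vanishing of the gradient says `b³ = -3a²c`, `c³ = -3ab²` and
`a³ = -3bc²`. Multiplying the three equations gives `(abc)³ = -27 (abc)³`, so `abc = 0` as
`28 ≠ 0`. The system is invariant under the cyclic shift of coordinates, and once one coordinate
vanishes the equations force the next one, and then the last one, to vanish.
-/

open MvPolynomial

/-- Klein's quartic `Q = z₀³z₂ + z₁³z₀ + z₂³z₁`. -/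
noncomputable def KleinQuartic : MvPolynomial (Fin 3) ℂ :=
  X 0 ^ 3 * X 2 + X 1 ^ 3 * X 0 + X 2 ^ 3 * X 1

section KleinGradient

variable {R : Type*} [CommRing R]

/-- The `i`-th partial derivative of `KleinQuartic` at `v`, indices read modulo 3. -/
def kleinGradient (v : Fin 3 → R) (i : Fin 3) : R :=
  3 * v i ^ 2 * v (i + 2) + v (i + 1) ^ 3

variable [NoZeroDivisors R]

theorem prod_eq_zero_of_kleinGradient_eq_zero {v : Fin 3 → R} (h28 : (28 : R) ≠ 0)
    (hv : ∀ i, kleinGradient v i = 0) : ∏ i, v i = 0 := by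
  have h0 := hv 0
  have h1 := hv 1
  have h2 := hv 2
  simp only [kleinGradient, Fin.reduceAdd] at h0 h1 h2
  have hcube : 28 * (v 0 * v 1 * v 2) ^ 3 = 0 := by
    linear_combination (v 2 ^ 3 * v 0 ^ 3) * h0 - (3 * v 0 ^ 5 * v 2) * h1
      + (9 * v 0 ^ 3 * v 1 ^ 2 * v 2) * h2
  rw [Fin.prod_univ_three]
  exact pow_eq_zero_iff three_ne_zero |>.mp ((mul_eq_zero.mp hcube).resolve_left h28)

theorem eq_zero_of_kleinGradient_eq_zero_of_apply_eq_zero {v : Fin 3 → R}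
    (hv : ∀ i, kleinGradient v i = 0) {i : Fin 3} (hi : v i = 0) : v = 0 := by
  have succ : ∀ j, v j = 0 → v (j + 1) = 0 := fun j hj =>
    pow_eq_zero_iff three_ne_zero |>.mp (by simpa [kleinGradient, hj] using hv j)
  have shift : ∀ k : Fin 3, v (i + k) = 0 := by
    intro k
    fin_cases k
    · simpa using hi
    · exact succ i hi
    · simpa [add_assoc] using succ _ (succ i hi)
  funext j
  simpa using shift (j - i)

theorem eq_zero_of_kleinGradient_eq_zero {v : Fin 3 → R} (h28 : (28 : R) ≠ 0)
    (hv : ∀ i, kleinGradient v i = 0) : v = 0 := by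
  have : Nontrivial R := nontrivial_of_ne _ _ h28
  obtain ⟨i, -, hi⟩ := Finset.prod_eq_zero_iff.mp (prod_eq_zero_of_kleinGradient_eq_zero h28 hv)
  exact eq_zero_of_kleinGradient_eq_zero_of_apply_eq_zero hv hi

end KleinGradient

theorem eval_pderiv_kleinQuartic (v : Fin 3 → ℂ) (i : Fin 3) :
    eval v (pderiv i KleinQuartic) = kleinGradient v i := by
  fin_cases i <;> simp [KleinQuartic, kleinGradient] <;> ring

/-- The only common zero in ℂ³ of the three partial derivatives of the Klein quartic is the
origin; that is, the plane projective quartic curve `{Q = 0}` is smooth. -/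
theorem kleinQuartic_smooth :
    ∀ v : Fin 3 → ℂ, (∀ i : Fin 3, eval v (pderiv i KleinQuartic) = 0) → v = 0 := by
  intro v hv
  refine eq_zero_of_kleinGradient_eq_zero (by norm_num) fun i => ?_
  rw [← eval_pderiv_kleinQuartic]
  exact hv i
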